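/- For a linearly ordered set L, the family of intervals of L of size at least 2 has the Bernstein property: there exists a set B ⊆ L such that every interval I of L with |I| ≥ 2 meets both B and L \ B. -/

import Mathlib

/-!
An interval with two points contains either a jump `z ⋖ w` or a dense subinterval. Points at
finite distance from one another form discrete blocks; colouring each point by the parity of its
distance to a fixed representative of its block separates every jump. On the dense part, call
`(s, t)` homogeneous if all its subintervals have the cardinality `κ` of `(s, t)`: it then has at
most `κ` subintervals, each of size `κ`, so a Bernstein-type transfinite construction splits all
of them at once. Every dense interval contains a homogeneous one (one of least cardinality), hence
meets a member of a maximal family of pairwise disjoint homogeneous intervals, and the splittings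
of the members of that family glue together.
-/

/-- `I` is an interval of the linear order `L`. -/
def IsInterval {L : Type*} [LinearOrder L] (I : Set L) : Prop :=
  ∀ x ∈ I, ∀ y ∈ I, ∀ z, x ≤ z → z ≤ y → z ∈ I

open Set Cardinal Function

section Splits

variable {α ι : Type*}

def Splits (B S : Set α) : Prop := (S ∩ B).Nonempty ∧ (S \ B).Nonempty

theorem Splits.mono {B S T : Set α} (h : Splits B S) (hST : S ⊆ T) : Splits B T :=
  ⟨h.1.mono (inter_subset_inter_left B hST), h.2.mono (sdiff_subset_sdiff_left hST)⟩

theorem Splits.biUnion {M : Set ι} {U D : ι → Set α} {S : Set α} {i : ι}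
    (hdisj : M.PairwiseDisjoint U) (hDU : ∀ j ∈ M, D j ⊆ U j) (hi : i ∈ M) (hSU : S ⊆ U i)
    (h : Splits (D i) S) : Splits (⋃ j ∈ M, D j) S := by
  refine ⟨h.1.mono (inter_subset_inter_right S (subset_biUnion_of_mem hi)), ?_⟩
  obtain ⟨x, hxS, hxD⟩ := h.2
  refine ⟨x, hxS, fun hx => ?_⟩
  obtain ⟨j, hj, hxj⟩ := mem_iUnion₂.1 hx
  obtain rfl : i = j := by_contra fun hij =>
    (hdisj hi hj hij).notMem_of_mem_left (hSU hxS) (hDU j hj hxj)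
  exact hxD hxj

theorem exists_pairwiseDisjoint_forall_inter_nonempty (Q : Set ι) (f : ι → Set α)
    (hQ : ∀ i ∈ Q, (f i).Nonempty) :
    ∃ M ⊆ Q, M.PairwiseDisjoint f ∧ ∀ i ∈ Q, ∃ j ∈ M, (f i ∩ f j).Nonempty := by
  obtain ⟨M, ⟨hMQ, hMdisj⟩, hmax⟩ := zorn_subset {M | M ⊆ Q ∧ M.PairwiseDisjoint f}
    fun c hc hchain => ⟨⋃₀ c, ⟨sUnion_subset fun M hM => (hc hM).1,
      (pairwiseDisjoint_sUnion hchain.directedOn).2 fun M hM => (hc hM).2⟩,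
      fun _ => subset_sUnion_of_mem⟩
  refine ⟨M, hMQ, hMdisj, fun i hi => ?_⟩
  by_contra! hdisj
  have hiM : i ∈ M := hmax ⟨insert_subset hi hMQ, hMdisj.insert fun j hj _ =>
    disjoint_iff_inter_eq_empty.2 (hdisj j hj)⟩ (subset_insert i M) (mem_insert i M)
  exact (hQ i hi).ne_empty (by simpa using hdisj i hiM)

end Splits

section Bernstein

universe u

variable {ι α : Type u}

theorem exists_injective_forall_mem (S : ι → Set α) (hS : ∀ i, #ι ≤ #(S i)) :
    ∃ f : ι → α, Injective f ∧ ∀ i, f i ∈ S i := by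
  -- a well-order on `ι` all of whose initial segments are smaller than `ι`
  obtain ⟨_, _, hord⟩ := exists_ord_eq_type_lt ι
  have hfresh : ∀ i (g : Iio i → α), (S i \ range g).Nonempty := fun i g =>
    sdiff_nonempty.2 fun hsub => ((mk_Iio_lt i hord).trans_le (hS i)).not_ge
      ((mk_le_mk_of_subset hsub).trans mk_range_le)
  let f : ι → α := wellFounded_lt.fix fun i rec => (hfresh i fun j => rec j j.2).some
  have hf : ∀ i, f i ∈ S i \ range fun j : Iio i => f j := fun i => by
    rw [show f i = _ from wellFounded_lt.fix_eq _ i]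
    exact Nonempty.some_mem _
  refine ⟨f, fun i j hij => ?_, fun i => (hf i).1⟩
  by_contra hne
  rcases lt_or_gt_of_ne hne with h | h
  · exact (hf j).2 ⟨⟨i, h⟩, hij⟩
  · exact (hf i).2 ⟨⟨j, h⟩, hij.symm⟩

theorem exists_splits_of_le_mk (S : ι → Set α) {μ : Cardinal.{u}} (hμ : ℵ₀ ≤ μ)
    (hι : #ι ≤ μ) (hS : ∀ i, μ ≤ #(S i)) : ∃ B : Set α, ∀ i, Splits B (S i) := by
  have hιBool : #(ι × Bool) ≤ μ := by
    rw [mk_prod, lift_uzero]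
    exact mul_le_of_le hμ hι ((lift_le_aleph0.2 mk_le_aleph0).trans hμ)
  obtain ⟨f, hf, hfS⟩ := exists_injective_forall_mem (fun p : ι × Bool => S p.1)
    fun p => hιBool.trans (hS p.1)
  refine ⟨range fun i => f (i, true),
    fun i => ⟨⟨f (i, true), hfS (i, true), i, rfl⟩, f (i, false), hfS (i, false), ?_⟩⟩
  rintro ⟨j, hj⟩
  simpa using hf hj

end Bernstein

section LinearOrder

variable {L : Type*} [LinearOrder L] {x y z w : L}

def HasNeighbor (z : L) : Prop := ∃ w, z ⋖ w ∨ w ⋖ z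

theorem exists_mem_Ico_covBy (hxy : x < y) (h : (Ico x y).Finite) : ∃ c ∈ Ico x y, c ⋖ y := by
  obtain ⟨c, hc, hmax⟩ := exists_max_image (Ico x y) id h ⟨x, le_rfl, hxy⟩
  exact ⟨c, hc, hc.2, fun d hcd hdy => (hmax d ⟨hc.1.trans hcd.le, hdy⟩).not_gt hcd⟩

theorem exists_mem_Ioc_covBy (hxy : x < y) (h : (Ioc x y).Finite) : ∃ c ∈ Ioc x y, x ⋖ c := by
  obtain ⟨c, hc, hmin⟩ := exists_min_image (Ioc x y) id h ⟨y, hxy, le_rfl⟩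
  exact ⟨c, hc, hc.1, fun d hxd hdc => (hmin d ⟨hxd, hdc.le.trans hc.2⟩).not_gt hdc⟩

theorem CovBy.even_ncard_uIcc_iff {c : L} (hzw : z ⋖ w) (hfin : (uIcc c z).Finite) :
    Even (uIcc c z).ncard ↔ ¬Even (uIcc c w).ncard := by
  rcases le_or_gt c z with hcz | hzc
  · have hcw := hcz.trans hzw.le
    rw [uIcc_of_le hcz] at hfin ⊢
    rw [uIcc_of_le hcw, ← Ico_insert_right hcw, ← Ici_inter_Iio, hzw.Iio_eq, Ici_inter_Iic,
      ncard_insert_of_notMem (fun hw => hzw.lt.not_ge hw.2) hfin, Nat.even_add_one, not_not]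
  · have hwc : w ≤ c := hzw.ge_of_gt hzc
    rw [uIcc_of_ge hzc.le] at hfin ⊢
    rw [uIcc_of_ge hwc, ← Ioc_insert_left hzc.le, ← Ioi_inter_Iic, hzw.Ioi_eq, Ici_inter_Iic,
      ncard_insert_of_notMem (fun hz => hzw.lt.not_ge hz.1)
        (hfin.subset (Icc_subset_Icc_left hzw.le)), Nat.even_add_one]

variable (L) in
def finiteDistSetoid : Setoid L where
  r x y := (uIcc x y).Finite
  iseqv := ⟨fun x => by simp, fun h => by rwa [uIcc_comm],
    fun h₁ h₂ => (h₁.union h₂).subset uIcc_subset_uIcc_union_uIcc⟩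

noncomputable def finiteDistRep (z : L) : L := (Quotient.mk (finiteDistSetoid L) z).out

theorem finite_uIcc_finiteDistRep (z : L) : (uIcc (finiteDistRep z) z).Finite :=
  Quotient.mk_out (s := finiteDistSetoid L) z

theorem CovBy.finiteDistRep_eq (h : z ⋖ w) : finiteDistRep z = finiteDistRep w := by
  have hfin : (uIcc z w).Finite := by rw [uIcc_of_le h.le, h.Icc_eq]; exact toFinite _
  rw [finiteDistRep, Quotient.sound (s := finiteDistSetoid L) hfin, finiteDistRep]

theorem hasNeighbor_of_finiteDistRep_ne (h : finiteDistRep z ≠ z) : HasNeighbor z := by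
  have hfin := finite_uIcc_finiteDistRep z
  rcases h.lt_or_gt with hlt | hgt
  · rw [uIcc_of_le hlt.le] at hfin
    obtain ⟨c, -, hcz⟩ := exists_mem_Ico_covBy hlt (hfin.subset Ico_subset_Icc_self)
    exact ⟨c, Or.inr hcz⟩
  · rw [uIcc_of_ge hgt.le] at hfin
    obtain ⟨c, -, hzc⟩ := exists_mem_Ioc_covBy hgt (hfin.subset Ioc_subset_Icc_self)
    exact ⟨c, Or.inl hzc⟩

variable (L) in
theorem exists_covBy_alternating :
    ∃ P : Set L, (∀ ⦃z w⦄, z ⋖ w → (z ∈ P ↔ w ∉ P)) ∧ ∀ z ∈ P, HasNeighbor z := by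
  refine ⟨{z | Even (uIcc (finiteDistRep z) z).ncard}, fun z w hzw => ?_, fun z hz => ?_⟩
  · change Even _ ↔ ¬Even _
    rw [← hzw.finiteDistRep_eq]
    exact hzw.even_ncard_uIcc_iff (finite_uIcc_finiteDistRep z)
  · refine hasNeighbor_of_finiteDistRep_ne fun hrep => ?_
    rw [mem_ofPred_eq, hrep, uIcc_self, ncard_singleton] at hz
    exact Nat.not_even_one hz

def IsDensePair (x y : L) : Prop := x < y ∧ ∀ ⦃z w⦄, x ≤ z → w ≤ y → ¬z ⋖ w

theorem IsDensePair.mono {s t : L} (h : IsDensePair x y) (hxs : x ≤ s) (hst : s < t)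
    (hty : t ≤ y) : IsDensePair s t :=
  ⟨hst, fun _ _ hz hw => h.2 (hxs.trans hz) (hw.trans hty)⟩

theorem IsDensePair.not_hasNeighbor (h : IsDensePair x y) (hz : z ∈ Ioo x y) :
    ¬HasNeighbor z := by
  rintro ⟨w, hzw | hwz⟩
  · rcases le_or_gt w y with hwy | hyw
    exacts [h.2 hz.1.le hwy hzw, hzw.2 hz.2 hyw]
  · rcases le_or_gt x w with hxw | hwx
    exacts [h.2 hxw hz.2.le hwz, hwz.2 hwx hz.1]

theorem IsDensePair.infinite (h : IsDensePair x y) : (Ioo x y).Infinite := fun hfin => by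
  obtain ⟨c, hc, hcy⟩ :=
    exists_mem_Ico_covBy h.1 (by rw [← Ioo_insert_left h.1]; exact hfin.insert x)
  exact h.2 hc.1 le_rfl hcy

def IsHomogeneousPair (s t : L) : Prop :=
  IsDensePair s t ∧ ∀ ⦃u v⦄, s ≤ u → u < v → v ≤ t → #(Ioo s t) ≤ #(Ioo u v)

theorem IsDensePair.exists_isHomogeneousPair (h : IsDensePair x y) :
    ∃ s t, x ≤ s ∧ t ≤ y ∧ IsHomogeneousPair s t := by
  let subpairs : Set (L × L) := {p | x ≤ p.1 ∧ p.1 < p.2 ∧ p.2 ≤ y}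
  have hxy : (x, y) ∈ subpairs := ⟨le_rfl, h.1, le_rfl⟩
  obtain ⟨_, ⟨⟨s, t⟩, ⟨hxs, hst, hty⟩, rfl⟩, hmin⟩ := wellFounded_lt.has_min
    ((fun p : L × L => #(Ioo p.1 p.2)) '' subpairs) ⟨_, mem_image_of_mem _ hxy⟩
  exact ⟨s, t, hxs, hty, h.mono hxs hst hty, fun u v hu huv hv =>
    not_lt.1 (hmin _ ⟨(u, v), ⟨hxs.trans hu, huv, hv.trans hty⟩, rfl⟩)⟩

theorem IsHomogeneousPair.exists_splits {s t : L} (h : IsHomogeneousPair s t) :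
    ∃ D ⊆ Ioo s t, ∀ ⦃u v⦄, s ≤ u → u < v → v ≤ t → Splits D (Ioo u v) := by
  have hμ : ℵ₀ ≤ #(Ioo s t) := aleph0_le_mk_iff.2 (infinite_coe_iff.2 h.1.infinite)
  have hIcc : #(Icc s t) ≤ #(Ioo s t) := by
    rw [← Ico_insert_right h.1.1.le, ← Ioo_insert_left h.1.1]
    calc #(insert t (insert s (Ioo s t)) : Set L) ≤ #(Ioo s t) + 1 + 1 :=
          mk_insert_le.trans (add_le_add mk_insert_le le_rfl)
      _ = #(Ioo s t) := by rw [add_one_eq hμ, add_one_eq hμ]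
  let ι := {q : Icc s t × Icc s t // q.1 < q.2}
  have hι : #ι ≤ #(Ioo s t) := (mk_subtype_le _).trans <| by
    rw [mk_prod, lift_id]
    exact mul_le_of_le hμ hIcc hIcc
  obtain ⟨B, hB⟩ := exists_splits_of_le_mk (fun q : ι => Ioo (q.1.1 : L) q.1.2) hμ hι
    fun q => h.2 q.1.1.2.1 q.2 q.1.2.2.2
  refine ⟨B ∩ Ioo s t, inter_subset_right, fun u v hu huv hv => ?_⟩
  obtain ⟨⟨a, haI, haB⟩, b, hbI, hbB⟩ :=
    hB ⟨(⟨u, hu, huv.le.trans hv⟩, ⟨v, hu.trans huv.le, hv⟩), huv⟩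
  exact ⟨⟨a, haI, haB, Ioo_subset_Ioo hu hv haI⟩, b, hbI, fun hb => hbB hb.1⟩

variable (L) in
theorem exists_splits_isDensePair :
    ∃ D : Set L, (∀ z ∈ D, ¬HasNeighbor z) ∧ ∀ ⦃x y⦄, IsDensePair x y → Splits D (Ioo x y) := by
  obtain ⟨M, hMQ, hMdisj, hMmeet⟩ := exists_pairwiseDisjoint_forall_inter_nonempty
    {p : L × L | IsHomogeneousPair p.1 p.2} (fun p => Ioo p.1 p.2)
    fun p hp => hp.1.infinite.nonempty
  choose! Dp hDp hDsplit using fun p (hp : p ∈ M) => (hMQ hp).exists_splits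
  refine ⟨⋃ p ∈ M, Dp p, fun z hz => ?_, fun x y hxy => ?_⟩
  · obtain ⟨p, hp, hzp⟩ := mem_iUnion₂.1 hz
    exact (hMQ hp).1.not_hasNeighbor (hDp p hp hzp)
  · obtain ⟨s, t, hxs, hty, hst⟩ := hxy.exists_isHomogeneousPair
    obtain ⟨p, hp, z, hzst, hzp⟩ := hMmeet (s, t) hst
    have hz : z ∈ Ioo (x ⊔ p.1) (y ⊓ p.2) := by
      rw [← Ioo_inter_Ioo]
      exact ⟨Ioo_subset_Ioo hxs hty hzst, hzp⟩
    exact (Splits.biUnion hMdisj hDp hp (Ioo_subset_Ioo le_sup_right inf_le_right)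
      (hDsplit p hp le_sup_right (hz.1.trans hz.2) inf_le_right)).mono
      (Ioo_subset_Ioo le_sup_left inf_le_left)

theorem splits_union_of_covBy {P D : Set L} (hP : ∀ ⦃z w⦄, z ⋖ w → (z ∈ P ↔ w ∉ P))
    (hD : ∀ z ∈ D, ¬HasNeighbor z) (hzw : z ⋖ w) : Splits (P ∪ D) {z, w} := by
  have hzD : z ∉ D := fun hz => hD z hz ⟨w, Or.inl hzw⟩
  have hwD : w ∉ D := fun hw => hD w hw ⟨z, Or.inr hzw⟩
  by_cases hzP : z ∈ P
  · exact ⟨⟨z, mem_insert z _, Or.inl hzP⟩, w, mem_insert_of_mem z rfl,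
      not_or.2 ⟨(hP hzw).1 hzP, hwD⟩⟩
  · exact ⟨⟨w, mem_insert_of_mem z rfl, Or.inl (not_not.1 (mt (hP hzw).2 hzP))⟩, z,
      mem_insert z _, not_or.2 ⟨hzP, hzD⟩⟩

theorem splits_union_of_isDensePair {P D : Set L} (hP : ∀ z ∈ P, HasNeighbor z)
    (hxy : IsDensePair x y) (hD : Splits D (Ioo x y)) : Splits (P ∪ D) (Ioo x y) := by
  obtain ⟨⟨a, ha, haD⟩, b, hb, hbD⟩ := hD
  exact ⟨⟨a, ha, Or.inr haD⟩, b, hb, not_or.2 ⟨fun hbP => hxy.not_hasNeighbor hb (hP b hbP), hbD⟩⟩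

end LinearOrder

/-- The family of intervals of size at least 2 of a linear order has the
Bernstein property: some `B ⊆ L` meets every such interval and so does its
complement. -/
theorem intervals_bernstein_property (L : Type*) [LinearOrder L] :
    ∃ B : Set L,
      ∀ I : Set L, IsInterval I → I.Nontrivial →
        (I ∩ B).Nonempty ∧ (I \ B).Nonempty := by
  obtain ⟨P, hPcovBy, hPneighbor⟩ := exists_covBy_alternating L
  obtain ⟨D, hDneighbor, hDsplits⟩ := exists_splits_isDensePair L
  refine ⟨P ∪ D, fun I hI hInontriv => ?_⟩
  obtain ⟨x, hx, y, hy, hxy⟩ := hInontriv.exists_lt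
  suffices Splits (P ∪ D) (Icc x y) from this.mono fun z hz => hI x hx y hy z hz.1 hz.2
  by_cases hdense : IsDensePair x y
  · exact (splits_union_of_isDensePair hPneighbor hdense (hDsplits hdense)).mono
      Ioo_subset_Icc_self
  · obtain ⟨z, w, hxz, hwy, hzw⟩ : ∃ z w, x ≤ z ∧ w ≤ y ∧ z ⋖ w := by
      simpa [IsDensePair, hxy] using hdense
    exact (splits_union_of_covBy hPcovBy hDneighbor hzw).mono
      (insert_subset ⟨hxz, hzw.le.trans hwy⟩ (singleton_subset_iff.2 ⟨hxz.trans hzw.le, hwy⟩))
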